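/- Pessimism of lower value iteration: suppose for all (s,a,h), |(p̂(·|s,a,h) − p(·|s,a,h))ᵀ V*_{h+1}| ≤ φ(s,a,h), and define recursively V̲_{H+1} = 0 and V̲_h(s) = max{ r(s,π(s,h),h) + p̂(·|s,π(s,h),h)ᵀ V̲_{h+1} − φ(s,π(s,h),h), 0 } for an arbitrary policy π. If additionally V̲_{h+1}(s) ≤ V*_{h+1}(s) for all s, then V̲_h(s) ≤ V*_h(s) for all s. -/

import Mathlib

/-! The proof compares one Bellman backup at a time: since `W ≤ V*_{h+1}` and `p̂` is
nonnegative, `p̂ᵀ W ≤ p̂ᵀ V*_{h+1} ≤ pᵀ V*_{h+1} + φ`, so the pessimistic backup of the action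
`π(s,h)` is at most its true backup, which is at most `V*_h(s)`; and `0 ≤ V*_h(s)` because
rewards and transition probabilities are nonnegative. -/

/-- Optimal value with `n` remaining steps at step `h`:
`V*` via backward recursion `V*_h(s) = max_a [r(s,a,h) + p(·|s,a,h)ᵀ V*_{h+1}]`. -/
noncomputable def optVal {S A : Type*} [Fintype S]
    (p : S → A → ℕ → S → ℝ) (r : S → A → ℕ → ℝ) :
    ℕ → ℕ → S → ℝ
  | 0, _, _ => 0
  | n + 1, h, s =>
      ⨆ a : A, (r s a h + ∑ s' : S, p s a h s' * optVal p r n (h + 1) s')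

section

variable {S A : Type*} [Fintype S]

theorem sum_mul_le_sum_mul_add_of_abs_sum_sub_mul_le {q p W V : S → ℝ} {c : ℝ}
    (hq : ∀ i, 0 ≤ q i) (hWV : ∀ i, W i ≤ V i) (hc : |∑ i, (q i - p i) * V i| ≤ c) :
    ∑ i, q i * W i ≤ ∑ i, p i * V i + c := by
  have hmono : ∑ i, q i * W i ≤ ∑ i, q i * V i :=
    Finset.sum_le_sum fun i _ => mul_le_mul_of_nonneg_left (hWV i) (hq i)
  have hdev : ∑ i, q i * V i - ∑ i, p i * V i ≤ c := by
    simpa only [← Finset.sum_sub_distrib, sub_mul] using (abs_le.mp hc).2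
  linarith

theorem optVal_nonneg (p : S → A → ℕ → S → ℝ) (r : S → A → ℕ → ℝ)
    (hp : ∀ s a h s', 0 ≤ p s a h s') (hr : ∀ s a h, 0 ≤ r s a h) :
    ∀ n h s, 0 ≤ optVal p r n h s
  | 0, _, _ => le_rfl
  | n + 1, h, s => Real.iSup_nonneg fun a =>
      add_nonneg (hr s a h) <| Finset.sum_nonneg fun s' _ =>
        mul_nonneg (hp s a h s') (optVal_nonneg p r hp hr n (h + 1) s')

theorem le_optVal_succ [Finite A] (p : S → A → ℕ → S → ℝ) (r : S → A → ℕ → ℝ)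
    (n h : ℕ) (s : S) (a : A) :
    r s a h + ∑ s' : S, p s a h s' * optVal p r n (h + 1) s' ≤ optVal p r (n + 1) h s :=
  le_ciSup (f := fun a => r s a h + ∑ s' : S, p s a h s' * optVal p r n (h + 1) s')
    (Set.finite_range _).bddAbove a

end

theorem lower_value_iteration_pessimism_general {S A : Type*} [Fintype S] [Fintype A]
    (H : ℕ) (p phat : S → A → ℕ → S → ℝ) (r : S → A → ℕ → ℝ)
    (φ : S → A → ℕ → ℝ) (π : S → ℕ → A)
    (hp0 : ∀ s a h s', 0 ≤ p s a h s')
    (hphat0 : ∀ s a h s', 0 ≤ phat s a h s')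
    (hr : ∀ s a h, r s a h ∈ Set.Icc (0:ℝ) 1)
    (h : ℕ) (hh : h < H)
    (hconc : ∀ s a,
      |∑ s' : S, (phat s a h s' - p s a h s') * optVal p r (H - (h + 1)) (h + 1) s'| ≤
        φ s a h)
    (W : S → ℝ)
    (hW : ∀ s, W s ≤ optVal p r (H - (h + 1)) (h + 1) s) :
    ∀ s : S,
      max (r s (π s h) h + (∑ s' : S, phat s (π s h) h s' * W s') - φ s (π s h) h) 0 ≤
        optVal p r (H - h) h s := by
  intro s
  generalize hm : H - (h + 1) = m at hconc hW
  rw [show H - h = m + 1 by omega]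
  have hbackup := sum_mul_le_sum_mul_add_of_abs_sum_sub_mul_le
    (hphat0 s (π s h) h) hW (hconc s (π s h))
  refine max_le ?_ (optVal_nonneg p r hp0 (fun s a h => (hr s a h).1) _ h s)
  linarith [le_optVal_succ p r m h s (π s h)]

/-- Pessimism of lower value iteration (one step): if
`|(p̂(·|s,a,h) − p(·|s,a,h))ᵀ V*_{h+1}| ≤ φ(s,a,h)` for all `(s,a)` and the
pessimistic value `V̲_{h+1} = W` satisfies `W ≤ V*_{h+1}` pointwise, then
`V̲_h(s) = max{r(s,π(s,h),h) + p̂(·|s,π(s,h),h)ᵀ W − φ(s,π(s,h),h), 0} ≤ V*_h(s)`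
for all `s`. -/
theorem lower_value_iteration_pessimism {S A : Type*} [Fintype S] [Fintype A]
    [Nonempty A]
    (H : ℕ) (p phat : S → A → ℕ → S → ℝ) (r : S → A → ℕ → ℝ)
    (φ : S → A → ℕ → ℝ) (π : S → ℕ → A)
    (hp0 : ∀ s a h s', 0 ≤ p s a h s')
    (hp1 : ∀ s a h, ∑ s' : S, p s a h s' = 1)
    (hphat0 : ∀ s a h s', 0 ≤ phat s a h s')
    (hphat1 : ∀ s a h, ∑ s' : S, phat s a h s' = 1)
    (hr : ∀ s a h, r s a h ∈ Set.Icc (0:ℝ) 1)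
    (hφ : ∀ s a h, 0 ≤ φ s a h)
    (h : ℕ) (hh : h < H)
    (hconc : ∀ s a,
      |∑ s' : S, (phat s a h s' - p s a h s') * optVal p r (H - (h + 1)) (h + 1) s'| ≤
        φ s a h)
    (W : S → ℝ)
    (hW : ∀ s, W s ≤ optVal p r (H - (h + 1)) (h + 1) s) :
    ∀ s : S,
      max (r s (π s h) h + (∑ s' : S, phat s (π s h) h s' * W s') - φ s (π s h) h) 0 ≤
        optVal p r (H - h) h s :=
  lower_value_iteration_pessimism_general H p phat r φ π hp0 hphat0 hr h hh hconc W hW
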